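/- Let A be a clone over ℕ, B a right A-algebra, and i ∈ ℕ. For a map Λ : B → B define Λ^{+i} : B → B by Λ^{+i}(b) = (Λb)^{+i} and Λ^{−i} : B → B by Λ^{−i}(b) = (Λb)^{−i}. Then: (1) if Λ is an abstract binding operation on x_i, then Λ^{+i} is a binding operation on x_i; (2) if Λ is a binding operation on x_i, then Λ^{−i} is an abstract binding operation on x_i; (3) these two assignments are mutually inverse, so the set of abstract binding operations on x_i for B and the set of binding operations on x_i for B are in bijection. -/
import Mathlib


/-- A clone over the positive integers ℕ = {1,2,3,…}. -/
structure CloneN (A : Type*) where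
  sub : A → (ℕ+ → A) → A
  x : ℕ+ → A
  sub_assoc : ∀ (a : A) (f g : ℕ+ → A), sub (sub a f) g = sub a (fun i => sub (f i) g)
  sub_x : ∀ a : A, sub a x = a
  x_sub : ∀ (i : ℕ+) (f : ℕ+ → A), sub (x i) f = f i

/-- A right algebra of a clone over ℕ. -/
structure RightAlgOn (A : Type*) (C : CloneN A) (B : Type*) where
  act : B → (ℕ+ → A) → B
  act_act : ∀ (b : B) (f g : ℕ+ → A), act (act b f) g = act b (fun i => C.sub (f i) g)
  act_x : ∀ b : B, act b C.x = b

/-- The sequence defining `b^{+i}`: position `j` goes to `x_j` for `j < i` and to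
`x_{j+1}` for `j ≥ i`. -/
def plusSeq {A : Type*} (C : CloneN A) (i : ℕ+) : ℕ+ → A :=
  fun j => if j < i then C.x j else C.x (j + 1)

/-- The sequence defining `b^{−i}`: position `j` goes to `x_j` for `j ≤ i` and to
`x_{j−1}` for `j > i`. -/
def minusSeq {A : Type*} (C : CloneN A) (i : ℕ+) : ℕ+ → A :=
  fun j => if j ≤ i then C.x j else C.x (j - 1)

/-- `Λ : B → B` is an abstract binding operation on `x_i`:
`(Λb)[f] = Λ(b[g])` where `g(j) = (f j)^{+i}` for `j < i`, `g(i) = x_i`, and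
`g(j) = (f (j−1))^{+i}` for `j > i`. -/
def IsAbsBinding {A B : Type*} (C : CloneN A) (R : RightAlgOn A C B) (i : ℕ+)
    (L : B → B) : Prop :=
  ∀ (b : B) (f : ℕ+ → A),
    R.act (L b) f = L (R.act b (fun j =>
      if j < i then C.sub (f j) (plusSeq C i)
      else if j = i then C.x i
      else C.sub (f (j - 1)) (plusSeq C i)))

/-- `M : B → B` is a binding operation on `x_i`:
`(Mb)[f] = (M(b[h]))^{−i}` where `h(j) = (f j)^{+i}` for `j ≠ i` and `h(i) = x_i`. -/
def IsBinding {A B : Type*} (C : CloneN A) (R : RightAlgOn A C B) (i : ℕ+)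
    (M : B → B) : Prop :=
  ∀ (b : B) (f : ℕ+ → A),
    R.act (M b) f =
      R.act (M (R.act b (fun j =>
        if j = i then C.x i else C.sub (f j) (plusSeq C i)))) (minusSeq C i)

section Helpers

variable {A B : Type*}

private lemma pnat_sub_add {i j : ℕ+} (h : i < j) : j - 1 + 1 = j :=
  PNat.sub_add_of_lt (lt_of_le_of_lt i.one_le h)

private lemma pnat_le_sub {i j : ℕ+} (h : i < j) : i ≤ j - 1 :=
  PNat.le_sub_one_of_lt h

/-- plusSeq followed by minusSeq is the identity substitution. -/
private lemma plus_minus (C : CloneN A) (i : ℕ+) :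
    (fun j => C.sub (plusSeq C i j) (minusSeq C i)) = C.x := by
  funext j
  by_cases hj : j < i
  · simp [plusSeq, minusSeq, hj, C.x_sub, le_of_lt hj]
  · have h1 : ¬ j + 1 ≤ i := by
      intro h; exact hj (lt_of_lt_of_le (PNat.lt_add_one_iff.mpr le_rfl) h)
    simp [plusSeq, minusSeq, hj, C.x_sub, h1, PNat.add_sub]

private lemma act_plus_minus (C : CloneN A) (R : RightAlgOn A C B) (i : ℕ+) (b : B) :
    R.act (R.act b (plusSeq C i)) (minusSeq C i) = b := by
  rw [R.act_act, plus_minus, R.act_x]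

end Helpers

/-- `Λ ↦ Λ^{+i}` sends abstract binding operations on `x_i` to binding operations on
`x_i`, `M ↦ M^{−i}` sends binding operations to abstract binding operations, and the
two assignments are mutually inverse, giving a bijection between the two sets. -/
theorem binding_operations_bijection {A B : Type*} (C : CloneN A)
    (R : RightAlgOn A C B) (i : ℕ+) :
    (∀ L : B → B, IsAbsBinding C R i L →
      IsBinding C R i (fun b => R.act (L b) (plusSeq C i))) ∧
    (∀ M : B → B, IsBinding C R i M →
      IsAbsBinding C R i (fun b => R.act (M b) (minusSeq C i))) ∧
    (∀ L : B → B, IsAbsBinding C R i L →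
      (fun b => R.act (R.act (L b) (plusSeq C i)) (minusSeq C i)) = L) ∧
    (∀ M : B → B, IsBinding C R i M →
      (fun b => R.act (R.act (M b) (minusSeq C i)) (plusSeq C i)) = M) := by
  refine ⟨?_, ?_, ?_, ?_⟩
  · -- (1)
    intro L hL b f
    simp only []
    rw [act_plus_minus, R.act_act, hL]
    congr 1
    congr 1
    funext j
    rcases lt_trichotomy j i with hj | hj | hj
    · simp [plusSeq, hj, C.x_sub, ne_of_lt hj]
    · simp [hj]
    · have h1 : ¬ j < i := not_lt_of_gt hj
      have h2 : ¬ j - 1 < i := not_lt_of_ge (pnat_le_sub hj)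
      simp [plusSeq, h1, h2, ne_of_gt hj, C.x_sub, pnat_sub_add hj]
  · -- (2)
    intro M hM b f
    simp only []
    rw [R.act_act, hM]
    congr 3
    funext j
    rcases lt_trichotomy j i with hj | hj | hj
    · simp [minusSeq, hj, le_of_lt hj, C.x_sub, ne_of_lt hj]
    · simp [hj]
    · have h1 : ¬ j ≤ i := not_le_of_gt hj
      simp [minusSeq, h1, not_lt_of_gt hj, ne_of_gt hj, C.x_sub]
  · -- (3)
    intro L _
    funext b
    exact act_plus_minus C R i (L b)
  · -- (4)
    intro M hM
    funext b
    rw [R.act_act, hM]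
    conv_rhs => rw [← R.act_x (M b), hM]
    congr 3
    funext j
    by_cases hj : j = i
    · simp [hj]
    · rcases lt_or_gt_of_ne hj with hj' | hj'
      · simp [minusSeq, plusSeq, hj, hj', le_of_lt hj', C.x_sub]
      · have h1 : ¬ j ≤ i := not_le_of_gt hj'
        have h2 : ¬ j - 1 < i := not_lt_of_ge (pnat_le_sub hj')
        simp [minusSeq, plusSeq, hj, h1, h2, C.x_sub, pnat_sub_add hj']
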